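/- The subgroup C is elementary abelian of order 16 (the four reflections s_{β₁}, …, s_{β₄} are commuting involutions generating C, and C ≅ (ℤ/2ℤ)⁴), and the centralizer of C in G is equal to C. -/
import Mathlib


open scoped TensorProduct

/-- The lattice `L = ℤ⁷` with standard basis `ℓ, e₁, …, e₆`. -/
abbrev L : Type := Fin 7 → ℤ

/-- The symmetric bilinear form `B(x,y) = x₀y₀ − x₁y₁ − ⋯ − x₆y₆`. -/
def B (x y : L) : ℤ :=
  x 0 * y 0 - (x 1 * y 1 + x 2 * y 2 + x 3 * y 3 + x 4 * y 4 + x 5 * y 5 + x 6 * y 6)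

/-- `h = 3ℓ − e₁ − ⋯ − e₆`, the hyperplane class, with `B(h,h) = 3`. -/
def hv : L := ![3, -1, -1, -1, -1, -1, -1]

/-- The set of lines: `Y = {y ∈ L : B(h,y) = 1 ∧ B(y,y) = −1}`. -/
def Yset : Set L := {y | B hv y = 1 ∧ B y y = -1}

/-- The set of roots: `R = {α ∈ L : B(h,α) = 0 ∧ B(α,α) = −2}`. -/
def Rset : Set L := {a | B hv a = 0 ∧ B a a = -2}

lemma B_add_smul_left (x y α : L) (c : ℤ) : B (x + c • α) y = B x y + c * B α y := by
  simp only [B, Pi.add_apply, Pi.smul_apply, smul_eq_mul]; ring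

/-- The reflection `s_α(x) = x + B(x,α)·α` as a linear map. -/
def sLinMap (α : L) : L →ₗ[ℤ] L where
  toFun x := x + B x α • α
  map_add' x y := by
    funext i
    simp only [B, Pi.add_apply, Pi.smul_apply, smul_eq_mul]
    ring
  map_smul' c x := by
    funext i
    simp only [B, Pi.add_apply, Pi.smul_apply, smul_eq_mul, RingHom.id_apply]
    ring

lemma sLinMap_apply (α x : L) : sLinMap α x = x + B x α • α := rfl

/-- The reflection `s_α` as a linear automorphism of `L`, for `α` with `B(α,α) = −2`. -/
def sEquiv (α : L) (hα : B α α = -2) : L ≃ₗ[ℤ] L :=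
  LinearEquiv.ofLinear (sLinMap α) (sLinMap α)
    (by
      refine LinearMap.ext fun x => ?_
      simp only [LinearMap.comp_apply, LinearMap.id_apply, sLinMap_apply]
      rw [B_add_smul_left, hα]
      have h : B x α + B x α * (-2) = -(B x α) := by ring
      rw [h, neg_smul]
      abel)
    (by
      refine LinearMap.ext fun x => ?_
      simp only [LinearMap.comp_apply, LinearMap.id_apply, sLinMap_apply]
      rw [B_add_smul_left, hα]
      have h : B x α + B x α * (-2) = -(B x α) := by ring
      rw [h, neg_smul]
      abel)

lemma sEquiv_apply (α : L) (hα : B α α = -2) (x : L) : sEquiv α hα x = x + B x α • α := rfl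

/-- `g` is a reflection `s_α` for some root `α ∈ R`. -/
def IsReflection (g : L ≃ₗ[ℤ] L) : Prop := ∃ α ∈ Rset, ∀ x, g x = x + B x α • α

/-- `G = Weyl(E₆)`, the subgroup of `GL(L)` generated by the reflections `s_α`, `α ∈ R`. -/
def G : Subgroup (L ≃ₗ[ℤ] L) := Subgroup.closure {g | IsReflection g}

/-- The four pairwise orthogonal roots `β₁ = e₁ − e₂`, `β₂ = e₃ − e₄`, `β₃ = e₅ − e₆`,
`β₄ = 2ℓ − e₁ − ⋯ − e₆`. -/
def βv : Fin 4 → L :=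
  ![![0, 1, -1, 0, 0, 0, 0], ![0, 0, 0, 1, -1, 0, 0], ![0, 0, 0, 0, 0, 1, -1],
    ![2, -1, -1, -1, -1, -1, -1]]

lemma βv_norm : ∀ i, B (βv i) (βv i) = -2 := by decide

lemma βv_orth_h : ∀ i, B hv (βv i) = 0 := by decide

/-- The four commuting reflections `s_{β₁}, …, s_{β₄}`. -/
def sβ (i : Fin 4) : L ≃ₗ[ℤ] L := sEquiv (βv i) (βv_norm i)

/-- The maximal cube `C = ⟨s_{β₁}, s_{β₂}, s_{β₃}, s_{β₄}⟩`. -/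
def C : Subgroup (L ≃ₗ[ℤ] L) := Subgroup.closure (Set.range sβ)

section AUX

lemma Bsymm (x y : L) : B x y = B y x := by simp only [B]; ring

lemma B_add_smul_right (x y α : L) (c : ℤ) : B x (y + c • α) = B x y + c * B x α := by
  rw [Bsymm, B_add_smul_left, Bsymm α x, Bsymm y x]

lemma mulEquiv_apply (f g : L ≃ₗ[ℤ] L) (x : L) : (f * g) x = f (g x) := rfl

lemma sβ_app (i : Fin 4) (x : L) : sβ i x = x + B x (βv i) • βv i := rfl

lemma Borth : ∀ i j : Fin 4, i ≠ j → B (βv i) (βv j) = 0 := by decide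

lemma zmod2_cases (a : ZMod 2) : a = 0 ∨ a = 1 := by revert a; decide

lemma zmod2_val_add (a b : ZMod 2) :
    (((a + b).val : ℤ)) = (a.val : ℤ) + b.val - 2 * (a.val * b.val) := by revert a b; decide

lemma sβ_invol (i : Fin 4) : sβ i * sβ i = 1 := by
  refine LinearEquiv.ext fun x => ?_
  rw [mulEquiv_apply, sβ_app, sβ_app, B_add_smul_left, βv_norm]
  show x + B x (βv i) • βv i + (B x (βv i) + B x (βv i) * -2) • βv i = x
  module

lemma pow_val_apply (i : Fin 4) (a : ZMod 2) (x : L) :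
    (sβ i ^ a.val) x = x + ((a.val : ℤ) * B x (βv i)) • βv i := by
  rcases zmod2_cases a with h | h <;> subst h <;>
    simp [sβ_app, ZMod.val_one, ZMod.val_zero]

end AUX

section AUX2

/-- The product `sβ₀^{k₀} sβ₁^{k₁} sβ₂^{k₂} sβ₃^{k₃}`. -/
def F (k : Fin 4 → ZMod 2) : L ≃ₗ[ℤ] L :=
  sβ 0 ^ (k 0).val * (sβ 1 ^ (k 1).val * (sβ 2 ^ (k 2).val * sβ 3 ^ (k 3).val))

lemma F_apply (k : Fin 4 → ZMod 2) (x : L) :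
    F k x = x + (((k 0).val : ℤ) * B x (βv 0)) • βv 0 + (((k 1).val : ℤ) * B x (βv 1)) • βv 1
      + (((k 2).val : ℤ) * B x (βv 2)) • βv 2 + (((k 3).val : ℤ) * B x (βv 3)) • βv 3 := by
  show (sβ 0 ^ (k 0).val) ((sβ 1 ^ (k 1).val) ((sβ 2 ^ (k 2).val) ((sβ 3 ^ (k 3).val) x))) = _
  rw [pow_val_apply, pow_val_apply, pow_val_apply, pow_val_apply,
    B_add_smul_left, B_add_smul_left, B_add_smul_left, B_add_smul_left, B_add_smul_left,
    B_add_smul_left, Borth 3 2 (by decide), Borth 3 1 (by decide), Borth 2 1 (by decide),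
    Borth 3 0 (by decide), Borth 2 0 (by decide), Borth 1 0 (by decide)]
  module

end AUX2

section AUX3

lemma F_add (k l : Fin 4 → ZMod 2) : F (k + l) = F k * F l := by
  refine LinearEquiv.ext fun x => ?_
  rw [mulEquiv_apply, F_apply, F_apply, F_apply,
    B_add_smul_left, B_add_smul_left, B_add_smul_left, B_add_smul_left,
    B_add_smul_left, B_add_smul_left, B_add_smul_left, B_add_smul_left,
    B_add_smul_left, B_add_smul_left, B_add_smul_left, B_add_smul_left,
    B_add_smul_left, B_add_smul_left, B_add_smul_left, B_add_smul_left]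
  rw [Borth 0 1 (by decide), Borth 0 2 (by decide), Borth 0 3 (by decide),
    Borth 1 0 (by decide), Borth 1 2 (by decide), Borth 1 3 (by decide),
    Borth 2 0 (by decide), Borth 2 1 (by decide), Borth 2 3 (by decide),
    Borth 3 0 (by decide), Borth 3 1 (by decide), Borth 3 2 (by decide),
    βv_norm 0, βv_norm 1, βv_norm 2, βv_norm 3]
  simp only [Pi.add_apply, zmod2_val_add]
  match_scalars <;> ring

lemma F_zero : F 0 = 1 := by
  refine LinearEquiv.ext fun x => ?_
  rw [F_apply]
  simp

lemma F_self_mul (k : Fin 4 → ZMod 2) : F k * F k = 1 := by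
  rw [← F_add]
  have : k + k = 0 := by
    funext i; exact CharTwo.add_self_eq_zero (k i)
  rw [this, F_zero]

lemma F_mem_C (k : Fin 4 → ZMod 2) : F k ∈ C := by
  have h : ∀ i : Fin 4, sβ i ∈ C := fun i => Subgroup.subset_closure ⟨i, rfl⟩
  exact mul_mem (pow_mem (h 0) _) (mul_mem (pow_mem (h 1) _) (mul_mem (pow_mem (h 2) _) (pow_mem (h 3) _)))

lemma F_apply_β (k : Fin 4 → ZMod 2) (j : Fin 4) :
    F k (βv j) = ((1 : ℤ) - 2 * ((k j).val : ℤ)) • βv j := by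
  have h0 : F k (βv 0) = ((1 : ℤ) - 2 * ((k 0).val : ℤ)) • βv 0 := by
    rw [F_apply, Borth 0 1 (by decide), Borth 0 2 (by decide), Borth 0 3 (by decide), βv_norm 0]
    match_scalars <;> ring
  have h1 : F k (βv 1) = ((1 : ℤ) - 2 * ((k 1).val : ℤ)) • βv 1 := by
    rw [F_apply, Borth 1 0 (by decide), Borth 1 2 (by decide), Borth 1 3 (by decide), βv_norm 1]
    match_scalars <;> ring
  have h2 : F k (βv 2) = ((1 : ℤ) - 2 * ((k 2).val : ℤ)) • βv 2 := by
    rw [F_apply, Borth 2 0 (by decide), Borth 2 1 (by decide), Borth 2 3 (by decide), βv_norm 2]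
    match_scalars <;> ring
  have h3 : F k (βv 3) = ((1 : ℤ) - 2 * ((k 3).val : ℤ)) • βv 3 := by
    rw [F_apply, Borth 3 0 (by decide), Borth 3 1 (by decide), Borth 3 2 (by decide), βv_norm 3]
    match_scalars <;> ring
  fin_cases j
  · exact h0
  · exact h1
  · exact h2
  · exact h3

end AUX3

section AUX4

/-- `F` as a monoid hom from `(ℤ/2)⁴` (multiplicative). -/
def Ehom : (Fin 4 → Multiplicative (ZMod 2)) →* (L ≃ₗ[ℤ] L) where
  toFun k := F fun i => (k i).toAdd
  map_one' := F_zero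
  map_mul' k l := F_add _ _

lemma F_injective : Function.Injective F := by
  intro k l h
  funext j
  have hb := congrArg (fun (g : L ≃ₗ[ℤ] L) => g (βv j)) h
  simp only [F_apply_β] at hb
  -- pick a coordinate where βv j is nonzero
  have hj : ∃ m : Fin 7, βv j m ≠ 0 := by
    have a0 : ∃ m : Fin 7, βv 0 m ≠ 0 := ⟨1, by decide⟩
    have a1 : ∃ m : Fin 7, βv 1 m ≠ 0 := ⟨3, by decide⟩
    have a2 : ∃ m : Fin 7, βv 2 m ≠ 0 := ⟨5, by decide⟩
    have a3 : ∃ m : Fin 7, βv 3 m ≠ 0 := ⟨0, by decide⟩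
    fin_cases j
    · exact a0
    · exact a1
    · exact a2
    · exact a3
  obtain ⟨m, hm⟩ := hj
  have := congrFun hb m
  simp only [Pi.smul_apply, smul_eq_mul] at this
  have hv' : ((k j).val : ℤ) = ((l j).val : ℤ) := by
    have h2 : ((1 : ℤ) - 2 * ((k j).val : ℤ)) = 1 - 2 * ((l j).val : ℤ) :=
      mul_right_cancel₀ hm this
    linarith
  have : (k j).val = (l j).val := by exact_mod_cast hv'
  exact ZMod.val_injective 2 this

lemma Ehom_injective : Function.Injective Ehom := by
  intro k l h
  have := F_injective h
  funext i
  exact congrFun this i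

lemma F_single (i : Fin 4) : F (fun j => if j = i then 1 else 0) = sβ i := by
  fin_cases i <;>
    simp [F, ZMod.val_one, ZMod.val_zero, pow_one, pow_zero, mul_one, one_mul]

lemma Ehom_range : Ehom.range = C := by
  apply le_antisymm
  · rintro x ⟨k, rfl⟩
    exact F_mem_C _
  · rw [C]
    apply (Subgroup.closure_le _).2
    rintro x ⟨i, rfl⟩
    exact ⟨fun j => Multiplicative.ofAdd (if j = i then 1 else 0), F_single i⟩

lemma mem_C_iff (g : L ≃ₗ[ℤ] L) : g ∈ C ↔ ∃ k, F k = g := by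
  rw [← Ehom_range]
  constructor
  · rintro ⟨k, rfl⟩; exact ⟨fun i => (k i).toAdd, rfl⟩
  · rintro ⟨k, rfl⟩; exact ⟨fun i => Multiplicative.ofAdd (k i), rfl⟩

end AUX4

section AUX5

/-- Every element of `G` is a `B`-isometry fixing `hv`. -/
lemma G_prop {g : L ≃ₗ[ℤ] L} (hg : g ∈ G) :
    (∀ x y, B (g x) (g y) = B x y) ∧ g hv = hv := by
  refine Subgroup.closure_induction (k := {g | IsReflection g})
    (p := fun g _ => (∀ x y, B (g x) (g y) = B x y) ∧ g hv = hv) ?_ ?_ ?_ ?_ hg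
  · rintro x ⟨α, ⟨hα0, hα2⟩, hx⟩
    constructor
    · intro a b
      rw [hx a, hx b, B_add_smul_left, B_add_smul_right, B_add_smul_right, Bsymm α b, hα2]
      ring
    · rw [hx hv, hα0]
      simp
  · exact ⟨fun x y => rfl, rfl⟩
  · rintro a b _ _ ⟨ha1, ha2⟩ ⟨hb1, hb2⟩
    refine ⟨fun x y => ?_, ?_⟩
    · rw [mulEquiv_apply, mulEquiv_apply, ha1, hb1]
    · rw [mulEquiv_apply, hb2, ha2]
  · rintro a _ ⟨ha1, ha2⟩
    have hsymm : ∀ z, (a⁻¹ : L ≃ₗ[ℤ] L) (a z) = z := fun z => a.symm_apply_apply z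
    have hsymm' : ∀ z, a ((a⁻¹ : L ≃ₗ[ℤ] L) z) = z := fun z => a.apply_symm_apply z
    refine ⟨fun x y => ?_, ?_⟩
    · calc B ((a⁻¹ : L ≃ₗ[ℤ] L) x) ((a⁻¹ : L ≃ₗ[ℤ] L) y)
          = B (a ((a⁻¹ : L ≃ₗ[ℤ] L) x)) (a ((a⁻¹ : L ≃ₗ[ℤ] L) y)) := (ha1 _ _).symm
        _ = B x y := by rw [hsymm', hsymm']
    · nth_rewrite 1 [← ha2]
      exact hsymm hv

lemma sβ_reflection (i : Fin 4) : IsReflection (sβ i) :=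
  ⟨βv i, ⟨βv_orth_h i, βv_norm i⟩, fun x => rfl⟩

lemma C_le_G : C ≤ G := by
  rw [C, G]
  exact Subgroup.closure_le _ |>.2 (by rintro x ⟨i, rfl⟩; exact Subgroup.subset_closure (sβ_reflection i))

end AUX5

section AUX6


lemma vec7_0 (a0 a1 a2 a3 a4 a5 a6 : ℤ) : (![a0,a1,a2,a3,a4,a5,a6] : L) 0 = a0 := rfl
lemma vec7_1 (a0 a1 a2 a3 a4 a5 a6 : ℤ) : (![a0,a1,a2,a3,a4,a5,a6] : L) 1 = a1 := rfl
lemma vec7_2 (a0 a1 a2 a3 a4 a5 a6 : ℤ) : (![a0,a1,a2,a3,a4,a5,a6] : L) 2 = a2 := rfl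
lemma vec7_3 (a0 a1 a2 a3 a4 a5 a6 : ℤ) : (![a0,a1,a2,a3,a4,a5,a6] : L) 3 = a3 := rfl
lemma vec7_4 (a0 a1 a2 a3 a4 a5 a6 : ℤ) : (![a0,a1,a2,a3,a4,a5,a6] : L) 4 = a4 := rfl
lemma vec7_5 (a0 a1 a2 a3 a4 a5 a6 : ℤ) : (![a0,a1,a2,a3,a4,a5,a6] : L) 5 = a5 := rfl
lemma vec7_6 (a0 a1 a2 a3 a4 a5 a6 : ℤ) : (![a0,a1,a2,a3,a4,a5,a6] : L) 6 = a6 := rfl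

lemma βv_0 : βv 0 = ![0, 1, -1, 0, 0, 0, 0] := rfl
lemma βv_1 : βv 1 = ![0, 0, 0, 1, -1, 0, 0] := rfl
lemma βv_2 : βv 2 = ![0, 0, 0, 0, 0, 1, -1] := rfl
lemma βv_3 : βv 3 = ![2, -1, -1, -1, -1, -1, -1] := rfl

lemma int_key (b d f : ℤ) (hsum : 2*(b + d + f) = 0)
    (hnorm : (b+1)^2 + b^2 + 2*d^2 + 2*f^2 = 1) : b = 0 ∧ d = 0 ∧ f = 0 := by
  have hs : 0 ≤ (d + f) * (d + f - 1) := by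
    rcases le_or_gt (d + f) 0 with h | h
    · nlinarith
    · nlinarith
  have hd : d = 0 ∧ f = 0 := by
    constructor <;> nlinarith [sq_nonneg d, sq_nonneg f]
  refine ⟨by omega, hd.1, hd.2⟩

lemma solve1 (w : L) (h1 : B hv w = 1) (hn : B w w = -1)
    (b0 : B w (βv 0) = -1) (b1 : B w (βv 1) = 0) (b2 : B w (βv 2) = 0) (b3 : B w (βv 3) = 1) :
    w = ![0, 1, 0, 0, 0, 0, 0] := by
  simp only [B, hv, βv_0, βv_1, βv_2, βv_3, vec7_0, vec7_1, vec7_2, vec7_3, vec7_4, vec7_5,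
    vec7_6] at h1 hn b0 b1 b2 b3
  have h0 : w 0 = 0 := by omega
  have hsum : 2 * (w 2 + w 4 + w 6) = 0 := by omega
  have h12 : w 1 = w 2 + 1 := by omega
  have h34 : w 3 = w 4 := by omega
  have h56 : w 5 = w 6 := by omega
  have hnorm : (w 2 + 1)^2 + (w 2)^2 + 2*(w 4)^2 + 2*(w 6)^2 = 1 := by
    rw [h0] at hn; rw [h12] at hn; nlinarith [hn]
  obtain ⟨hb, hd, hf⟩ := int_key (w 2) (w 4) (w 6) hsum hnorm
  funext i
  fin_cases i
  · show w 0 = 0; omega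
  · show w 1 = 1; omega
  · show w 2 = 0; omega
  · show w 3 = 0; omega
  · show w 4 = 0; omega
  · show w 5 = 0; omega
  · show w 6 = 0; omega

end AUX6

section AUX6b

lemma solve3 (w : L) (h1 : B hv w = 1) (hn : B w w = -1)
    (b0 : B w (βv 0) = 0) (b1 : B w (βv 1) = -1) (b2 : B w (βv 2) = 0) (b3 : B w (βv 3) = 1) :
    w = ![0, 0, 0, 1, 0, 0, 0] := by
  simp only [B, hv, βv_0, βv_1, βv_2, βv_3, vec7_0, vec7_1, vec7_2, vec7_3, vec7_4, vec7_5,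
    vec7_6] at h1 hn b0 b1 b2 b3
  have h0 : w 0 = 0 := by omega
  have hsum : 2 * (w 4 + w 2 + w 6) = 0 := by omega
  have h12 : w 1 = w 2 := by omega
  have h34 : w 3 = w 4 + 1 := by omega
  have h56 : w 5 = w 6 := by omega
  have hnorm : (w 4 + 1)^2 + (w 4)^2 + 2*(w 2)^2 + 2*(w 6)^2 = 1 := by
    rw [h0] at hn; rw [h34] at hn; nlinarith [hn]
  obtain ⟨hb, hd, hf⟩ := int_key (w 4) (w 2) (w 6) hsum hnorm
  funext i
  fin_cases i
  · show w 0 = 0; omega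
  · show w 1 = 0; omega
  · show w 2 = 0; omega
  · show w 3 = 1; omega
  · show w 4 = 0; omega
  · show w 5 = 0; omega
  · show w 6 = 0; omega

lemma solve5 (w : L) (h1 : B hv w = 1) (hn : B w w = -1)
    (b0 : B w (βv 0) = 0) (b1 : B w (βv 1) = 0) (b2 : B w (βv 2) = -1) (b3 : B w (βv 3) = 1) :
    w = ![0, 0, 0, 0, 0, 1, 0] := by
  simp only [B, hv, βv_0, βv_1, βv_2, βv_3, vec7_0, vec7_1, vec7_2, vec7_3, vec7_4, vec7_5,
    vec7_6] at h1 hn b0 b1 b2 b3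
  have h0 : w 0 = 0 := by omega
  have hsum : 2 * (w 6 + w 2 + w 4) = 0 := by omega
  have h12 : w 1 = w 2 := by omega
  have h34 : w 3 = w 4 := by omega
  have h56 : w 5 = w 6 + 1 := by omega
  have hnorm : (w 6 + 1)^2 + (w 6)^2 + 2*(w 2)^2 + 2*(w 4)^2 = 1 := by
    rw [h0] at hn; rw [h56] at hn; nlinarith [hn]
  obtain ⟨hb, hd, hf⟩ := int_key (w 6) (w 2) (w 4) hsum hnorm
  funext i
  fin_cases i
  · show w 0 = 0; omega
  · show w 1 = 0; omega
  · show w 2 = 0; omega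
  · show w 3 = 0; omega
  · show w 4 = 0; omega
  · show w 5 = 1; omega
  · show w 6 = 0; omega

end AUX6b

section AUX7

lemma smul_two_cancel (x y : L) (h : (2 : ℤ) • x = (2 : ℤ) • y) : x = y := by
  funext i
  have := congrFun h i
  simp only [Pi.smul_apply, smul_eq_mul] at this
  omega

/-- Rigidity: an isometry fixing `hv` and all four roots `βv i` is the identity. -/
lemma rigid (g : L ≃ₗ[ℤ] L) (hiso : ∀ x y, B (g x) (g y) = B x y) (hh : g hv = hv)
    (hβ : ∀ i, g (βv i) = βv i) : g = 1 := by
  have hBh : ∀ x, B hv (g x) = B hv x := fun x => by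
    conv_lhs => rw [← hh]
    rw [hiso]
  have hBβ : ∀ i x, B (g x) (βv i) = B x (βv i) := fun i x => by
    conv_lhs => rw [← hβ i]
    rw [hiso]
  have he1 : g ![0, 1, 0, 0, 0, 0, 0] = ![0, 1, 0, 0, 0, 0, 0] :=
    solve1 _ (by rw [hBh]; decide) (by rw [hiso]; decide) (by rw [hBβ]; decide)
      (by rw [hBβ]; decide) (by rw [hBβ]; decide) (by rw [hBβ]; decide)
  have he3 : g ![0, 0, 0, 1, 0, 0, 0] = ![0, 0, 0, 1, 0, 0, 0] :=
    solve3 _ (by rw [hBh]; decide) (by rw [hiso]; decide) (by rw [hBβ]; decide)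
      (by rw [hBβ]; decide) (by rw [hBβ]; decide) (by rw [hBβ]; decide)
  have he5 : g ![0, 0, 0, 0, 0, 1, 0] = ![0, 0, 0, 0, 0, 1, 0] :=
    solve5 _ (by rw [hBh]; decide) (by rw [hiso]; decide) (by rw [hBβ]; decide)
      (by rw [hBβ]; decide) (by rw [hBβ]; decide) (by rw [hBβ]; decide)
  have he2 : g ![0, 0, 1, 0, 0, 0, 0] = ![0, 0, 1, 0, 0, 0, 0] := by
    have hsub : (![0, 0, 1, 0, 0, 0, 0] : L) = ![0, 1, 0, 0, 0, 0, 0] - βv 0 := by decide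
    rw [hsub, map_sub, he1, hβ 0]
  have he4 : g ![0, 0, 0, 0, 1, 0, 0] = ![0, 0, 0, 0, 1, 0, 0] := by
    have hsub : (![0, 0, 0, 0, 1, 0, 0] : L) = ![0, 0, 0, 1, 0, 0, 0] - βv 1 := by decide
    rw [hsub, map_sub, he3, hβ 1]
  have he6 : g ![0, 0, 0, 0, 0, 0, 1] = ![0, 0, 0, 0, 0, 0, 1] := by
    have hsub : (![0, 0, 0, 0, 0, 0, 1] : L) = ![0, 0, 0, 0, 0, 1, 0] - βv 2 := by decide
    rw [hsub, map_sub, he5, hβ 2]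
  have hl : g ![1, 0, 0, 0, 0, 0, 0] = ![1, 0, 0, 0, 0, 0, 0] := by
    apply smul_two_cancel
    have hsub : (2 : ℤ) • (![1, 0, 0, 0, 0, 0, 0] : L)
        = βv 3 + (![0, 1, 0, 0, 0, 0, 0] + ![0, 0, 1, 0, 0, 0, 0] + ![0, 0, 0, 1, 0, 0, 0]
          + ![0, 0, 0, 0, 1, 0, 0] + ![0, 0, 0, 0, 0, 1, 0] + ![0, 0, 0, 0, 0, 0, 1]) := by
      decide
    rw [← map_smul, hsub, map_add, map_add, map_add, map_add, map_add, map_add,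
      hβ 3, he1, he2, he3, he4, he5, he6]
  have hsingle : ∀ i : Fin 7, g (Pi.single i 1) = Pi.single i 1 := by
    have p0 : Pi.single (0 : Fin 7) (1 : ℤ) = ![1, 0, 0, 0, 0, 0, 0] := by decide
    have p1 : Pi.single (1 : Fin 7) (1 : ℤ) = ![0, 1, 0, 0, 0, 0, 0] := by decide
    have p2 : Pi.single (2 : Fin 7) (1 : ℤ) = ![0, 0, 1, 0, 0, 0, 0] := by decide
    have p3 : Pi.single (3 : Fin 7) (1 : ℤ) = ![0, 0, 0, 1, 0, 0, 0] := by decide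
    have p4 : Pi.single (4 : Fin 7) (1 : ℤ) = ![0, 0, 0, 0, 1, 0, 0] := by decide
    have p5 : Pi.single (5 : Fin 7) (1 : ℤ) = ![0, 0, 0, 0, 0, 1, 0] := by decide
    have p6 : Pi.single (6 : Fin 7) (1 : ℤ) = ![0, 0, 0, 0, 0, 0, 1] := by decide
    intro i
    fin_cases i
    · show g (Pi.single (0 : Fin 7) 1) = Pi.single (0 : Fin 7) 1
      rw [p0]; exact hl
    · show g (Pi.single (1 : Fin 7) 1) = Pi.single (1 : Fin 7) 1
      rw [p1]; exact he1
    · show g (Pi.single (2 : Fin 7) 1) = Pi.single (2 : Fin 7) 1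
      rw [p2]; exact he2
    · show g (Pi.single (3 : Fin 7) 1) = Pi.single (3 : Fin 7) 1
      rw [p3]; exact he3
    · show g (Pi.single (4 : Fin 7) 1) = Pi.single (4 : Fin 7) 1
      rw [p4]; exact he4
    · show g (Pi.single (5 : Fin 7) 1) = Pi.single (5 : Fin 7) 1
      rw [p5]; exact he5
    · show g (Pi.single (6 : Fin 7) 1) = Pi.single (6 : Fin 7) 1
      rw [p6]; exact he6
  have hmap : g.toLinearMap = LinearMap.id := by
    apply Module.Basis.ext (Pi.basisFun ℤ (Fin 7))
    intro i
    rw [Pi.basisFun_apply]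
    simpa using hsingle i
  refine LinearEquiv.ext fun x => ?_
  have := LinearMap.congr_fun hmap x
  simpa using this

end AUX7

section AUX8

lemma B_smul_smul (c d : ℤ) (x y : L) : B (c • x) (d • y) = c * d * B x y := by
  simp only [B, Pi.smul_apply, smul_eq_mul]; ring

lemma sβ_comm (i j : Fin 4) : sβ i * sβ j = sβ j * sβ i := by
  rcases eq_or_ne i j with rfl | hij
  · rfl
  · refine LinearEquiv.ext fun x => ?_
    rw [mulEquiv_apply, mulEquiv_apply, sβ_app, sβ_app, sβ_app, sβ_app,
      B_add_smul_left, B_add_smul_left, Borth j i hij.symm, Borth i j hij]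
    match_scalars <;> ring

lemma sβ_beta (i : Fin 4) : sβ i (βv i) = -βv i := by
  rw [sβ_app, βv_norm]
  module

lemma neg_βv_ne (i : Fin 4) : -βv i ≠ βv i := by fin_cases i <;> decide

theorem cube_thm :
    (∀ i, sβ i * sβ i = 1) ∧
    (∀ i j, sβ i * sβ j = sβ j * sβ i) ∧
    Nat.card ↥C = 16 ∧
    Nonempty (↥C ≃* (Fin 4 → Multiplicative (ZMod 2))) ∧
    Subgroup.centralizer (C : Set (L ≃ₗ[ℤ] L)) ⊓ G = C := by
  have equivC : (Fin 4 → Multiplicative (ZMod 2)) ≃* ↥C :=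
    (MonoidHom.ofInjective Ehom_injective).trans (MulEquiv.subgroupCongr Ehom_range)
  refine ⟨sβ_invol, sβ_comm, ?_, ⟨equivC.symm⟩, ?_⟩
  · rw [← Nat.card_congr equivC.toEquiv]
    simp [Nat.card_eq_fintype_card]
  · apply le_antisymm
    · rintro g ⟨hcent, hG⟩
      obtain ⟨hiso, hh⟩ := G_prop hG
      have hci : ∀ i, sβ i * g = g * sβ i := fun i =>
        Subgroup.mem_centralizer_iff.mp hcent (sβ i) (Subgroup.subset_closure ⟨i, rfl⟩)
      have hβd : ∀ i, g (βv i) = βv i ∨ g (βv i) = -βv i := by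
        intro i
        have h1 : sβ i (g (βv i)) = g (sβ i (βv i)) := by
          rw [← mulEquiv_apply, ← mulEquiv_apply, hci i]
        rw [sβ_beta, map_neg, sβ_app] at h1
        set c := B (g (βv i)) (βv i) with hc
        have h2 : (2 : ℤ) • g (βv i) = (-c) • βv i := by
          funext m
          have hm := congrFun h1 m
          simp only [Pi.add_apply, Pi.smul_apply, Pi.neg_apply, smul_eq_mul] at hm ⊢
          linarith
        have h3 : (-8 : ℤ) = c * c * (-2) := by
          have hB := congrArg (fun z => B z z) h2
          simp only [B_smul_smul] at hB
          rw [hiso, βv_norm] at hB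
          linear_combination hB
        have hc4 : (c - 2) * (c + 2) = 0 := by nlinarith
        rcases mul_eq_zero.mp hc4 with h | h
        · right
          have hcv : c = 2 := by linarith
          rw [hcv] at h2
          apply smul_two_cancel
          rw [h2]
          module
        · left
          have hcv : c = -2 := by linarith
          rw [hcv] at h2
          apply smul_two_cancel
          rw [h2]
          module
      classical
      set k : Fin 4 → ZMod 2 := fun i => if g (βv i) = βv i then 0 else 1 with hk
      have hFk : ∀ i, (g * F k) (βv i) = βv i := by
        intro i
        rcases hβd i with hgi | hgi
        · have hki : k i = 0 := by simp [hk, hgi]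
          rw [mulEquiv_apply, F_apply_β, hki]
          simpa using hgi
        · have hne : ¬ (g (βv i) = βv i) := by
            rw [hgi]; exact neg_βv_ne i
          have hki : k i = 1 := by simp [hk, hne]
          rw [mulEquiv_apply, F_apply_β, hki]
          have : ((1 : ℤ) - 2 * ((1 : ZMod 2).val : ℤ)) • βv i = -βv i := by
            rw [ZMod.val_one]; module
          rw [this, map_neg, hgi, neg_neg]
      have hFkG := G_prop (C_le_G (F_mem_C k))
      have hone : g * F k = 1 := by
        apply rigid
        · intro x y
          rw [mulEquiv_apply, mulEquiv_apply, hiso, hFkG.1]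
        · rw [mulEquiv_apply, hFkG.2, hh]
        · exact hFk
      have hg : g = F k := by
        have h1 : g = (F k)⁻¹ := eq_inv_of_mul_eq_one_left hone
        rw [h1, inv_eq_of_mul_eq_one_right (F_self_mul k)]
      rw [hg]
      exact F_mem_C k
    · refine le_inf ?_ C_le_G
      intro c hc
      rw [Subgroup.mem_centralizer_iff]
      intro m hm
      obtain ⟨kc, rfl⟩ := (mem_C_iff c).1 hc
      obtain ⟨km, rfl⟩ := (mem_C_iff m).1 hm
      rw [← F_add, ← F_add, add_comm]

end AUX8

/-- `C` is elementary abelian of order 16: the four reflections `s_{βᵢ}` are commuting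
involutions generating `C`, `C ≅ (ℤ/2ℤ)⁴`, and the centralizer of `C` in `G` equals `C`. -/
theorem cube_elementary_abelian_and_self_centralizing :
    (∀ i, sβ i * sβ i = 1) ∧
    (∀ i j, sβ i * sβ j = sβ j * sβ i) ∧
    Nat.card ↥C = 16 ∧
    Nonempty (↥C ≃* (Fin 4 → Multiplicative (ZMod 2))) ∧
    Subgroup.centralizer (C : Set (L ≃ₗ[ℤ] L)) ⊓ G = C :=
  cube_thm
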